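/- arXiv:2305.07138 — 3 statements merged into one kernel-verified Lean document; each statement's English description precedes it below -/
import Mathlib

section
/- Let C ~ Bernoulli(1/2) and, conditionally on C, let E_1, …, E_m be i.i.d. Bernoulli(C/2) (i.e. each E_i = 0 almost surely when C = 0, and the E_i are i.i.d. Bernoulli(1/2) when C = 1). Then the mutual information I_m = I((E_1, …, E_m); C) satisfies I_m = -(1/2 + 2^{-(m+1)})·log(1/2 + 2^{-(m+1)}) + ((1 - (m+1)·2^{-m})/2)·log 2. In particular I_1 = (3/4)·log(4/3) = h(1/4) - h(1/2)/2, where h is the binary entropy function. -/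
/-- The binary entropy function `h(x) = -x log x - (1-x) log(1-x)` (natural log,
convention `0 · log 0 = 0`). -/
noncomputable def binEntropy (x : ℝ) : ℝ :=
  -x * Real.log x - (1 - x) * Real.log (1 - x)

/-- Shannon mutual information of the two coordinates of a finitely-valued joint
distribution given by its probability mass function `q`:
`I = Σ_{x,y} q(x,y) · log( q(x,y) / ( (Σ_{y'} q(x,y')) · (Σ_{x'} q(x',y)) ) )`,
with natural logarithm and the convention `0 · log 0 = 0`. -/
noncomputable def miJoint {α β : Type*} [Fintype α] [Fintype β] (q : α → β → ℝ) : ℝ :=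
  ∑ x : α, ∑ y : β,
    q x y * Real.log (q x y / ((∑ y' : β, q x y') * (∑ x' : α, q x' y)))

/-- The joint probability mass function of `((E_1, …, E_m), C)` where
`C ~ Bernoulli(1/2)` and, conditionally on `C`, the `E_i` are i.i.d. `Bernoulli(C/2)`:
given `C = 0` all `E_i = 0` almost surely; given `C = 1` the `E_i` are i.i.d. uniform
on `{0,1}`. -/
noncomputable def jointEC (m : ℕ) : (Fin m → Bool) → Bool → ℝ := fun e c =>
  if c then (1 / 2) * (1 / 2) ^ m
  else if e = fun _ => false then 1 / 2 else 0

theorem mi_main (m : ℕ) :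
    miJoint (jointEC m) =
      -(1 / 2 + (2 : ℝ) ^ (-((m : ℤ) + 1))) * Real.log (1 / 2 + (2 : ℝ) ^ (-((m : ℤ) + 1)))
        + ((1 - ((m : ℝ) + 1) * (2 : ℝ) ^ (-(m : ℤ))) / 2) * Real.log 2 := by
  set t : ℝ := (1/2) * (1/2)^m with ht
  have ht0 : (0:ℝ) < t := by rw [ht]; positivity
  have hts : (0:ℝ) < t + 1/2 := by linarith
  have hpow1 : (2 : ℝ) ^ (-((m : ℤ) + 1)) = t := by
    rw [show -((m:ℤ)+1) = -((m+1 : ℕ) : ℤ) by push_cast; ring, zpow_neg, zpow_natCast, ht]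
    rw [one_div, inv_pow, pow_succ]
    ring
  have hpow2 : (2 : ℝ) ^ (-(m : ℤ)) = 2 * t := by
    rw [zpow_neg, zpow_natCast, ht, one_div, inv_pow]; ring
  have hcard : ((Finset.univ : Finset (Fin m → Bool)).card : ℝ) = 2 ^ m := by
    rw [Finset.card_univ, Fintype.card_fun]; simp
  have hcolT : (∑ x' : Fin m → Bool, jointEC m x' true) = 2 ^ m * t := by
    simp only [jointEC, if_true]
    rw [Finset.sum_const, nsmul_eq_mul, ht]
    rw [Finset.card_univ, Fintype.card_fun]; push_cast; simp
  have h2t : (2:ℝ) ^ m * t = 1/2 := by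
    rw [ht, one_div, inv_pow]; field_simp
  have hcolF : (∑ x' : Fin m → Bool, jointEC m x' false) = 1/2 := by
    simp [jointEC]
  have e0 : (Fin m → Bool) := fun _ => false
  unfold miJoint
  simp only [Fintype.sum_bool, hcolT, hcolF, h2t]
  have key : ∀ x : Fin m → Bool,
      jointEC m x true * Real.log (jointEC m x true /
          ((jointEC m x true + jointEC m x false) * (1/2)))
        + jointEC m x false * Real.log (jointEC m x false /
          ((jointEC m x true + jointEC m x false) * (1/2)))
      = t * Real.log 2
        + (if x = (fun _ => false) then
            (t * Real.log (t / ((t + 1/2) * (1/2)))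
              + (1/2) * Real.log ((1/2) / ((t + 1/2) * (1/2))) - t * Real.log 2)
          else 0) := by
    have jT : ∀ x : Fin m → Bool, jointEC m x true = t := by
      intro x; simp [jointEC, ht]
    have jF0 : jointEC m (fun _ => false) false = 1/2 := by simp [jointEC]
    have jFn : ∀ x : Fin m → Bool, x ≠ (fun _ => false) → jointEC m x false = 0 := by
      intro x hx; simp [jointEC, hx]
    intro x
    by_cases hx : x = fun _ => false
    · subst hx
      rw [jT, jF0, if_pos rfl]
      ring
    · rw [jT, jFn x hx, if_neg hx, add_zero]
      have h1 : t / (t * (1/2)) = 2 := by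
        field_simp
      rw [h1]
      simp
  rw [Finset.sum_congr rfl (fun x _ => key x), Finset.sum_add_distrib,
    Finset.sum_const, Finset.sum_ite_eq' Finset.univ (fun _ => false),
    if_pos (Finset.mem_univ _), nsmul_eq_mul, hcard]
  have hlogt : Real.log t = -(((m:ℝ)+1) * Real.log 2) := by
    rw [ht, show (1/2:ℝ)*(1/2)^m = (1/2)^(m+1) by ring, Real.log_pow, one_div,
      Real.log_inv]
    push_cast; ring
  have hlogA : Real.log (t / ((t + 1/2) * (1/2)))
      = Real.log t - Real.log (t + 1/2) + Real.log 2 := by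
    rw [Real.log_div ht0.ne' (by positivity),
      Real.log_mul hts.ne' (by norm_num), one_div, Real.log_inv]
    ring
  have hlogB : Real.log ((1/2) / ((t + 1/2) * (1/2))) = - Real.log (t + 1/2) := by
    rw [Real.log_div (by norm_num) (by positivity),
      Real.log_mul hts.ne' (by norm_num), one_div, Real.log_inv]
    ring
  rw [hpow1, hpow2, hlogA, hlogB, hlogt, show (1/2:ℝ) + t = t + 1/2 by ring]
  linear_combination Real.log 2 * h2t

/-- The mutual information `I_m = I((E_1,…,E_m); C)` satisfies
`I_m = -(1/2 + 2^{-(m+1)}) log(1/2 + 2^{-(m+1)}) + ((1 - (m+1) 2^{-m})/2) log 2`;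
in particular `I_1 = (3/4) log(4/3) = h(1/4) - h(1/2)/2`. -/
theorem stmt2 :
    (∀ m : ℕ,
      miJoint (jointEC m) =
        -(1 / 2 + (2 : ℝ) ^ (-((m : ℤ) + 1))) * Real.log (1 / 2 + (2 : ℝ) ^ (-((m : ℤ) + 1)))
          + ((1 - ((m : ℝ) + 1) * (2 : ℝ) ^ (-(m : ℤ))) / 2) * Real.log 2) ∧
    miJoint (jointEC 1) = (3 / 4) * Real.log (4 / 3) ∧
    (3 / 4) * Real.log (4 / 3) = binEntropy (1 / 4) - binEntropy (1 / 2) / 2 := by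
  refine ⟨mi_main, ?_, ?_⟩
  · rw [mi_main 1]
    norm_num
    rw [show (3/4:ℝ) = (4/3)⁻¹ by norm_num, Real.log_inv]
    ring
  · have l43 : Real.log (4/3 : ℝ) = Real.log 4 - Real.log 3 :=
      Real.log_div (by norm_num) (by norm_num)
    have l34 : Real.log (3/4 : ℝ) = Real.log 3 - Real.log 4 :=
      Real.log_div (by norm_num) (by norm_num)
    have l14 : Real.log (1/4 : ℝ) = -Real.log 4 := by rw [one_div, Real.log_inv]
    have l12 : Real.log (1/2 : ℝ) = -Real.log 2 := by rw [one_div, Real.log_inv]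
    have l4 : Real.log 4 = 2 * Real.log 2 := by
      rw [show (4:ℝ) = 2^2 by norm_num, Real.log_pow]; push_cast; ring
    simp only [binEntropy]
    rw [show (1 - 1/4 : ℝ) = 3/4 by norm_num, show (1 - 1/2 : ℝ) = 1/2 by norm_num,
      l43, l34, l14, l12, l4]
    ring
end

section
/- Let G be a simple graph on vertex set [n] = {1,…,n} and let k ≤ n. Define a joint distribution as follows: C ~ Bernoulli(1/2); for each pair {v,w} that is an edge of G, the indicator E_{v,w} is Bernoulli(C/2) (all such indicators conditionally i.i.d. given C), and for each pair {v,w} that is not an edge of G, E_{v,w} = 0 almost surely. Then: (a) for every vertex subset U ⊆ [n], I((E_{v,w})_{{v,w} ⊆ U, v ≠ w}; C) = I_m, where m is the number of edges of G with both endpoints in U and I_m denotes the mutual information of m conditionally-i.i.d. Bernoulli(C/2) indicators with C; and (b) G contains a k-clique if and only if there exists a subset U of size k with I((E_{v,w})_{{v,w} ⊆ U}; C) ≥ I_{k(k-1)/2}; for any U of size k that is not a clique of G, the mutual information is strictly smaller than I_{k(k-1)/2}. -/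
/-- Shannon mutual information `I(X; Y)` of two finitely-valued random variables on a
finite sample space `Ω` equipped with a probability mass function `p`:
`I(X;Y) = Σ_{a,b} P(X=a, Y=b) · log( P(X=a, Y=b) / (P(X=a) · P(Y=b)) )`,
with natural logarithm and the convention `0 · log 0 = 0`. -/
noncomputable def miRV {Ω α β : Type*} [Fintype Ω] [Fintype α] [Fintype β]
    [DecidableEq α] [DecidableEq β] (p : Ω → ℝ) (X : Ω → α) (Y : Ω → β) : ℝ :=
  ∑ a : α, ∑ b : β,
    (∑ ω ∈ Finset.univ.filter fun ω => X ω = a ∧ Y ω = b, p ω) *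
      Real.log ((∑ ω ∈ Finset.univ.filter fun ω => X ω = a ∧ Y ω = b, p ω) /
        ((∑ ω ∈ Finset.univ.filter fun ω => X ω = a, p ω) *
          (∑ ω ∈ Finset.univ.filter fun ω => Y ω = b, p ω)))

/-- `I_m`, the mutual information of `m` conditionally-i.i.d. `Bernoulli(C/2)`
indicators with the class label `C ~ Bernoulli(1/2)`. -/
noncomputable def Im (m : ℕ) : ℝ :=
  miRV (fun ω : (Fin m → Bool) × Bool => jointEC m ω.1 ω.2) Prod.fst Prod.snd

/-- The joint probability mass function of the family of edge indicators
`(E_{v,w})_{{v,w}}` together with the class label `C`: `C ~ Bernoulli(1/2)`; for each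
pair that is an edge of `G`, the indicator is `Bernoulli(C/2)` (all such indicators
conditionally i.i.d. given `C`), and for each pair that is not an edge of `G` the
indicator is `0` almost surely. -/
noncomputable def graphJoint {n : ℕ} (G : SimpleGraph (Fin n)) [DecidableRel G.Adj] :
    (Sym2 (Fin n) → Bool) → Bool → ℝ := fun e c =>
  (1 / 2) * ∏ s : Sym2 (Fin n),
    if s ∈ G.edgeFinset then (if c then (1 : ℝ) / 2 else if e s then 0 else 1)
    else if e s then 0 else 1

/-- The mutual information `I((E_{v,w})_{{v,w} ⊆ U, v ≠ w}; C)` of the family of edge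
indicators for pairs of distinct vertices inside `U` with the class label `C`. -/
noncomputable def miU {n : ℕ} (G : SimpleGraph (Fin n)) [DecidableRel G.Adj]
    (U : Finset (Fin n)) : ℝ :=
  miRV (fun ω : (Sym2 (Fin n) → Bool) × Bool => graphJoint G ω.1 ω.2)
    (fun ω => fun s : {s : Sym2 (Fin n) // (∀ v ∈ s, v ∈ U) ∧ ¬s.IsDiag} => ω.1 s.val)
    (fun ω => ω.2)
open Finset in
/-- Mutual information of a joint pmf matrix. -/
noncomputable def MImat {α β : Type*} [Fintype α] [Fintype β] (J : α → β → ℝ) : ℝ :=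
  ∑ a : α, ∑ b : β,
    J a b * Real.log (J a b / ((∑ b' : β, J a b') * (∑ a' : α, J a' b)))

lemma miRV_eq_MImat {Ω α β : Type*} [Fintype Ω] [Fintype α] [Fintype β]
    [DecidableEq α] [DecidableEq β] (p : Ω → ℝ) (X : Ω → α) (Y : Ω → β) :
    miRV p X Y
      = MImat (fun a b => ∑ ω ∈ Finset.univ.filter fun ω => X ω = a ∧ Y ω = b, p ω) := by
  unfold miRV MImat
  refine Finset.sum_congr rfl fun a _ => Finset.sum_congr rfl fun b _ => ?_
  have h1 : ∑ b' : β, ∑ ω ∈ Finset.univ.filter fun ω => X ω = a ∧ Y ω = b', p ω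
      = ∑ ω ∈ Finset.univ.filter fun ω => X ω = a, p ω := by
    rw [← Finset.sum_fiberwise (Finset.univ.filter fun ω => X ω = a) Y p]
    refine Finset.sum_congr rfl fun b' _ => ?_
    rw [Finset.filter_filter]
  have h2 : ∑ a' : α, ∑ ω ∈ Finset.univ.filter fun ω => X ω = a' ∧ Y ω = b, p ω
      = ∑ ω ∈ Finset.univ.filter fun ω => Y ω = b, p ω := by
    rw [← Finset.sum_fiberwise (Finset.univ.filter fun ω => Y ω = b) X p]
    refine Finset.sum_congr rfl fun a' _ => ?_
    rw [Finset.filter_filter]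
    exact Finset.sum_congr (Finset.filter_congr fun ω _ => and_comm) fun _ _ => rfl
  rw [h1, h2]

lemma MImat_comp {α α' β : Type*} [Fintype α] [Fintype α'] [Fintype β] [DecidableEq α]
    (J : α → β → ℝ) (f : α' → α) (hf : Function.Injective f)
    (h0 : ∀ a, a ∉ Set.range f → ∀ b, J a b = 0) :
    MImat (fun a' b => J (f a') b) = MImat J := by
  have marg : ∀ b, ∑ a' : α', J (f a') b = ∑ a : α, J a b := by
    intro b
    rw [← Finset.sum_image (f := fun a => J a b)
      (g := f) (fun x _ y _ h => hf h)]
    refine Finset.sum_subset (Finset.subset_univ _) fun a _ ha => ?_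
    refine h0 a ?_ b
    simp only [Finset.mem_image, Finset.mem_univ, true_and] at ha
    rintro ⟨a', rfl⟩
    exact ha ⟨a', rfl⟩
  have step1 : MImat (fun a' b => J (f a') b)
      = ∑ a ∈ Finset.univ.image f, ∑ b : β,
          J a b * Real.log (J a b / ((∑ b' : β, J a b') * (∑ a' : α, J a' b))) := by
    rw [Finset.sum_image (fun x _ y _ h => hf h)]
    unfold MImat
    refine Finset.sum_congr rfl fun a' _ => Finset.sum_congr rfl fun b _ => ?_
    rw [marg b]
  rw [step1]
  unfold MImat
  refine Finset.sum_subset (Finset.subset_univ _) fun a _ ha => ?_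
  have hz : ∀ b, J a b = 0 := by
    refine h0 a ?_
    simp only [Finset.mem_image, Finset.mem_univ, true_and] at ha
    rintro ⟨a', rfl⟩
    exact ha ⟨a', rfl⟩
  refine Finset.sum_eq_zero fun b _ => by rw [hz b, zero_mul]

lemma Im_eq_MImat (m : ℕ) : Im m = MImat (jointEC m) := by
  rw [Im, miRV_eq_MImat]
  congr 1
  funext a b
  have : (Finset.univ.filter fun ω : (Fin m → Bool) × Bool => ω.1 = a ∧ ω.2 = b)
      = {(a, b)} := by
    ext ⟨x, y⟩
    simp [Prod.ext_iff]
  rw [this, Finset.sum_singleton]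

open Finset in
lemma L1 {ι : Type*} [Fintype ι] [DecidableEq ι] (Q : ι → Prop) [DecidablePred Q]
    (w : ι → Bool → ℝ) (hw : ∀ i, w i false + w i true = 1) (a : {i // Q i} → Bool) :
    (∑ e : ι → Bool, if (∀ i : {i // Q i}, e i.val = a i) then ∏ i : ι, w i (e i) else 0)
      = ∏ i : {i // Q i}, w i.val (a i) := by
  have key : ∀ e : ι → Bool,
      (if (∀ i : {i // Q i}, e i.val = a i) then ∏ i : ι, w i (e i) else 0)
      = ∏ i : ι, (if h : Q i then (if e i = a ⟨i, h⟩ then w i (e i) else 0)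
          else w i (e i)) := by
    intro e
    by_cases h : ∀ i : {i // Q i}, e i.val = a i
    · rw [if_pos h]
      refine Finset.prod_congr rfl fun i _ => ?_
      by_cases hq : Q i
      · rw [dif_pos hq, if_pos (h ⟨i, hq⟩)]
      · rw [dif_neg hq]
    · rw [if_neg h]
      push_neg at h
      obtain ⟨i, hi⟩ := h
      refine (Finset.prod_eq_zero (Finset.mem_univ i.val) ?_).symm
      rw [dif_pos i.2]
      rw [if_neg (by simpa using hi)]
  simp_rw [key]
  rw [← Fintype.prod_sum (fun i b => if h : Q i then
    (if b = a ⟨i, h⟩ then w i b else 0) else w i b)]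
  have fac : ∀ i : ι, (∑ b : Bool, if h : Q i then (if b = a ⟨i, h⟩ then w i b else 0)
      else w i b) = if h : Q i then w i (a ⟨i, h⟩) else 1 := by
    intro i
    by_cases hq : Q i
    · simp only [dif_pos hq]
      rw [Finset.sum_ite_eq' Finset.univ (a ⟨i, hq⟩) (w i)]
      simp
    · simp only [dif_neg hq, Fintype.sum_bool]
      rw [add_comm]; exact hw i
  simp_rw [fac]
  rw [Finset.prod_dite (fun i (h : Q i) => w i (a ⟨i, h⟩)) (fun _ _ => (1 : ℝ))]
  rw [Finset.prod_const_one, mul_one]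
  refine Finset.prod_bij' (fun x _ => (⟨x.1, by simpa using (Finset.mem_filter.mp x.2).2⟩ :
    {i // Q i})) (fun i _ => ⟨i.1, by simp [i.2]⟩) ?_ ?_ ?_ ?_ ?_ <;> simp
noncomputable def logFun (q : ℝ) : ℝ :=
  Real.log 2 + (q * Real.log q - (1 + q) * Real.log (1 + q)) / 2

lemma MImat_jointEC (m : ℕ) : MImat (jointEC m) = logFun ((2 : ℝ) ^ m)⁻¹ := by
  classical
  set q : ℝ := ((2 : ℝ) ^ m)⁻¹ with hqdef
  have hq0 : (0 : ℝ) < q := by positivity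
  have h2m : ((2 : ℝ) ^ m) = q⁻¹ := by rw [hqdef, inv_inv]
  have hpow : (1 / 2 : ℝ) ^ m = q := by rw [hqdef, one_div, inv_pow]
  have hT : ∀ a : Fin m → Bool, jointEC m a true = q / 2 := by
    intro a
    unfold jointEC
    rw [if_pos rfl, hpow]
    ring
  have hF : ∀ a : Fin m → Bool,
      jointEC m a false = if a = fun _ => false then 1 / 2 else 0 := by
    intro a
    simp [jointEC]
  have hrow : ∀ a : Fin m → Bool, (∑ c : Bool, jointEC m a c)
      = (if a = fun _ => false then 1 / 2 else 0) + q / 2 := by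
    intro a
    rw [Fintype.sum_bool, hT, hF, add_comm]
  have hcolT : (∑ a : Fin m → Bool, jointEC m a true) = 1 / 2 := by
    simp_rw [hT]
    rw [Finset.sum_const, Finset.card_univ]
    have hc : Fintype.card (Fin m → Bool) = 2 ^ m := by simp
    rw [hc, nsmul_eq_mul]
    push_cast
    rw [h2m]
    field_simp
  have hcolF : (∑ a : Fin m → Bool, jointEC m a false) = 1 / 2 := by
    simp_rw [hF]
    rw [Finset.sum_ite_eq' Finset.univ (fun _ => false) (fun _ => (1:ℝ)/2)]
    simp
  have hcol : ∀ c : Bool, (∑ a : Fin m → Bool, jointEC m a c) = 1 / 2 := by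
    intro c; cases c
    · exact hcolF
    · exact hcolT
  unfold MImat
  have hterm : ∀ a : Fin m → Bool,
      (∑ c : Bool, jointEC m a c * Real.log (jointEC m a c /
        ((∑ c' : Bool, jointEC m a c') * (∑ a' : Fin m → Bool, jointEC m a' c))))
      = jointEC m a true * Real.log (jointEC m a true /
          (((if a = fun _ => false then 1/2 else 0) + q / 2) * (1/2)))
        + jointEC m a false * Real.log (jointEC m a false /
          (((if a = fun _ => false then 1/2 else 0) + q / 2) * (1/2))) := by
    intro a
    rw [Fintype.sum_bool, hrow a, hcol true, hcol false]
  simp_rw [hterm]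
  rw [Finset.sum_eq_sum_sdiff_singleton_add (Finset.mem_univ (fun _ => false : Fin m → Bool))]
  have hrest : ∀ a ∈ Finset.univ \ {(fun _ => false : Fin m → Bool)},
      (jointEC m a true * Real.log (jointEC m a true /
          (((if a = fun _ => false then 1/2 else 0) + q / 2) * (1/2)))
        + jointEC m a false * Real.log (jointEC m a false /
          (((if a = fun _ => false then 1/2 else 0) + q / 2) * (1/2))))
      = q / 2 * Real.log 2 := by
    intro a ha
    have hane : a ≠ fun _ => false := by
      simp only [Finset.mem_sdiff, Finset.mem_singleton] at ha
      exact ha.2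
    rw [hT, hF, if_neg hane, zero_mul, add_zero, zero_add]
    congr 1
    rw [show q / 2 / (q / 2 * (1 / 2)) = 2 by field_simp]
  rw [Finset.sum_congr rfl hrest, Finset.sum_const]
  have hcard : (Finset.univ \ {(fun _ => false : Fin m → Bool)}).card = 2 ^ m - 1 := by
    rw [Finset.card_sdiff_of_subset (Finset.singleton_subset_iff.mpr (Finset.mem_univ _))]
    rw [Finset.card_singleton, Finset.card_univ]
    simp
  rw [hcard, nsmul_eq_mul]
  have hcast : ((2 ^ m - 1 : ℕ) : ℝ) = q⁻¹ - 1 := by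
    rw [Nat.cast_sub (Nat.one_le_two_pow), ← h2m]
    push_cast
    ring
  rw [hcast, hT, hF, if_pos rfl]
  have h1q : (0:ℝ) < 1 + q := by linarith
  have e1 : (q / 2) / ((1 / 2 + q / 2) * (1 / 2)) = 2 * q / (1 + q) := by
    field_simp
  have e2 : (1 / 2 : ℝ) / ((1 / 2 + q / 2) * (1 / 2)) = 2 / (1 + q) := by
    field_simp
  rw [e1, e2]
  rw [Real.log_div (by positivity) (by positivity), Real.log_div (by positivity) (by positivity),
    Real.log_mul (by norm_num) (ne_of_gt hq0)]
  have hinv : q⁻¹ * q = 1 := inv_mul_cancel₀ (ne_of_gt hq0)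
  unfold logFun
  linear_combination Real.log 2 / 2 * hinv

lemma logFun_strictAntiOn : StrictAntiOn logFun (Set.Ioi (0 : ℝ)) := by
  have hg : ∀ x ∈ Set.Ioi (0 : ℝ), HasDerivAt
      (fun q : ℝ => q * Real.log q - (1 + q) * Real.log (1 + q))
      (Real.log x - Real.log (1 + x)) x := by
    intro x hx
    simp only [Set.mem_Ioi] at hx
    have hx0 : x ≠ 0 := ne_of_gt hx
    have h1x : (1 + x) ≠ 0 := by positivity
    have h1 : HasDerivAt (fun q : ℝ => q * Real.log q) (Real.log x + 1) x :=
      Real.hasDerivAt_mul_log hx0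
    have h2 : HasDerivAt (fun q : ℝ => (1 + q) * Real.log (1 + q))
        ((Real.log (1 + x) + 1) * 1) x := by
      have hcomp : HasDerivAt (fun q : ℝ => 1 + q) 1 x := by
        simpa using (hasDerivAt_id x).const_add 1
      exact (Real.hasDerivAt_mul_log h1x).comp x hcomp
    have : HasDerivAt (fun q : ℝ => q * Real.log q - (1 + q) * Real.log (1 + q))
        (Real.log x + 1 - (Real.log (1 + x) + 1) * 1) x := h1.sub h2
    convert this using 1
    ring
  have ganti : StrictAntiOn (fun q : ℝ => q * Real.log q - (1 + q) * Real.log (1 + q))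
      (Set.Ioi (0 : ℝ)) := by
    refine strictAntiOn_of_deriv_neg (convex_Ioi 0)
      (fun x hx => (hg x hx).continuousAt.continuousWithinAt) ?_
    intro x hx
    rw [interior_Ioi] at hx
    rw [(hg x hx).deriv]
    have h0 : (0:ℝ) < x := hx
    have : Real.log x < Real.log (1 + x) := Real.log_lt_log h0 (by linarith)
    linarith
  intro a ha b hb hab
  have := ganti ha hb hab
  unfold logFun
  simp only at this
  linarith

lemma Im_strictMono : StrictMono Im := by
  intro a b hab
  rw [Im_eq_MImat, Im_eq_MImat, MImat_jointEC, MImat_jointEC]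
  have h1 : ((2 : ℝ) ^ b)⁻¹ < ((2 : ℝ) ^ a)⁻¹ := by
    apply inv_strictAnti₀ (by positivity)
    exact pow_lt_pow_right₀ (by norm_num) hab
  exact logFun_strictAntiOn (Set.mem_Ioi.mpr (by positivity))
    (Set.mem_Ioi.mpr (by positivity)) h1
lemma Jg_eq {n : ℕ} (G : SimpleGraph (Fin n)) [DecidableRel G.Adj] (U : Finset (Fin n))
    (a : {s : Sym2 (Fin n) // (∀ v ∈ s, v ∈ U) ∧ ¬s.IsDiag} → Bool) (c : Bool) :
    (∑ ω ∈ Finset.univ.filter fun ω : (Sym2 (Fin n) → Bool) × Bool =>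
        (fun s : {s : Sym2 (Fin n) // (∀ v ∈ s, v ∈ U) ∧ ¬s.IsDiag} => ω.1 s.val) = a
          ∧ ω.2 = c,
      graphJoint G ω.1 ω.2)
    = (1 / 2) * ∏ s : {s : Sym2 (Fin n) // (∀ v ∈ s, v ∈ U) ∧ ¬s.IsDiag},
        (if s.val ∈ G.edgeFinset then (if c then (1 : ℝ) / 2 else if a s then 0 else 1)
         else if a s then 0 else 1) := by
  classical
  rw [Finset.sum_filter, Fintype.sum_prod_type]
  have step1 : ∀ e : Sym2 (Fin n) → Bool,
      (∑ c' : Bool, if ((fun s : {s : Sym2 (Fin n) // (∀ v ∈ s, v ∈ U) ∧ ¬s.IsDiag} =>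
          e s.val) = a ∧ c' = c) then graphJoint G e c' else 0)
      = if (∀ s : {s : Sym2 (Fin n) // (∀ v ∈ s, v ∈ U) ∧ ¬s.IsDiag}, e s.val = a s)
          then (1 / 2) * ∏ s : Sym2 (Fin n),
            (if s ∈ G.edgeFinset then (if c then (1 : ℝ) / 2 else if e s then 0 else 1)
             else if e s then 0 else 1) else 0 := by
    intro e
    by_cases h : (fun s : {s : Sym2 (Fin n) // (∀ v ∈ s, v ∈ U) ∧ ¬s.IsDiag} => e s.val) = a
    · rw [if_pos (funext_iff.mp h)]
      simp [h, graphJoint]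
    · rw [if_neg (fun hh => h (funext hh))]
      simp [h]
  simp_rw [step1]
  have step2 : (∑ e : Sym2 (Fin n) → Bool,
      if (∀ s : {s : Sym2 (Fin n) // (∀ v ∈ s, v ∈ U) ∧ ¬s.IsDiag}, e s.val = a s)
        then (1 / 2) * ∏ s : Sym2 (Fin n),
          (if s ∈ G.edgeFinset then (if c then (1 : ℝ) / 2 else if e s then 0 else 1)
           else if e s then 0 else 1) else 0)
      = (1 / 2) * ∑ e : Sym2 (Fin n) → Bool,
        (if (∀ s : {s : Sym2 (Fin n) // (∀ v ∈ s, v ∈ U) ∧ ¬s.IsDiag}, e s.val = a s)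
          then ∏ s : Sym2 (Fin n),
            (if s ∈ G.edgeFinset then (if c then (1 : ℝ) / 2 else if e s then 0 else 1)
             else if e s then 0 else 1) else 0) := by
    rw [Finset.mul_sum]
    exact Finset.sum_congr rfl fun e _ => by rw [mul_ite, mul_zero]
  rw [step2]
  congr 1
  exact L1 (fun s : Sym2 (Fin n) => (∀ v ∈ s, v ∈ U) ∧ ¬s.IsDiag)
    (fun s b => if s ∈ G.edgeFinset then (if c then (1 : ℝ) / 2 else if b then 0 else 1)
      else if b then 0 else 1)
    (fun s => by by_cases hs : s ∈ G.edgeFinset <;> cases c <;> simp [hs] <;> norm_num) a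
lemma prodBoolIndicator {γ : Type*} [Fintype γ] (g : γ → Bool) :
    (∏ s : γ, if g s then (0:ℝ) else 1) = if (∀ s, g s = false) then 1 else 0 := by
  by_cases h : ∀ s, g s = false
  · rw [if_pos h]
    exact Finset.prod_eq_one fun s _ => by rw [h s]; simp
  · rw [if_neg h]
    push_neg at h
    obtain ⟨s, hs⟩ := h
    refine Finset.prod_eq_zero (Finset.mem_univ s) ?_
    simp [show g s = true by simpa using hs]

noncomputable def Jfun {n : ℕ} (G : SimpleGraph (Fin n)) [DecidableRel G.Adj]
    (U : Finset (Fin n))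
    (a : {s : Sym2 (Fin n) // (∀ v ∈ s, v ∈ U) ∧ ¬s.IsDiag} → Bool) (c : Bool) : ℝ :=
  (1 / 2) * ∏ s : {s : Sym2 (Fin n) // (∀ v ∈ s, v ∈ U) ∧ ¬s.IsDiag},
    (if s.val ∈ G.edgeFinset then (if c then (1 : ℝ) / 2 else if a s then 0 else 1)
     else if a s then 0 else 1)

noncomputable def iotaMap {n : ℕ} (G : SimpleGraph (Fin n)) [DecidableRel G.Adj]
    (U : Finset (Fin n))
    (f : {s : Sym2 (Fin n) // s ∈ G.edgeFinset.filter fun s => ∀ v ∈ s, v ∈ U} → Bool) :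
    {s : Sym2 (Fin n) // (∀ v ∈ s, v ∈ U) ∧ ¬s.IsDiag} → Bool :=
  fun s => if h : s.val ∈ G.edgeFinset.filter (fun s => ∀ v ∈ s, v ∈ U)
    then f ⟨s.val, h⟩ else false

section Assembly

variable {n : ℕ} (G : SimpleGraph (Fin n)) [DecidableRel G.Adj] (U : Finset (Fin n))

lemma mem_EU_iff (s : Sym2 (Fin n)) :
    s ∈ G.edgeFinset.filter (fun s => ∀ v ∈ s, v ∈ U)
      ↔ s ∈ G.edgeFinset ∧ ∀ v ∈ s, v ∈ U := Finset.mem_filter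

/-- lift an element of the edge subtype to the pair subtype -/
def liftT (t : {s : Sym2 (Fin n) // s ∈ G.edgeFinset.filter fun s => ∀ v ∈ s, v ∈ U}) :
    {s : Sym2 (Fin n) // (∀ v ∈ s, v ∈ U) ∧ ¬s.IsDiag} :=
  ⟨t.val, ((mem_EU_iff G U t.val).mp t.2).2,
    SimpleGraph.not_isDiag_of_mem_edgeFinset (((mem_EU_iff G U t.val).mp t.2).1)⟩

lemma iota_liftT (f) (t) : iotaMap G U f (liftT G U t) = f t := by
  unfold iotaMap liftT
  rw [dif_pos t.2]

lemma iota_inj : Function.Injective (iotaMap G U) := by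
  intro f g h
  funext t
  have h1 := congrFun h (liftT G U t)
  rwa [iota_liftT, iota_liftT] at h1

lemma iota_zero (a : {s : Sym2 (Fin n) // (∀ v ∈ s, v ∈ U) ∧ ¬s.IsDiag} → Bool)
    (ha : a ∉ Set.range (iotaMap G U)) (c : Bool) : Jfun G U a c = 0 := by
  have hnot : ¬ ∀ s : {s : Sym2 (Fin n) // (∀ v ∈ s, v ∈ U) ∧ ¬s.IsDiag},
      s.val ∉ G.edgeFinset.filter (fun s => ∀ v ∈ s, v ∈ U) → a s = false := by
    intro hall
    apply ha
    refine ⟨fun t => a (liftT G U t), ?_⟩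
    funext s
    unfold iotaMap
    by_cases h : s.val ∈ G.edgeFinset.filter (fun s => ∀ v ∈ s, v ∈ U)
    · rw [dif_pos h]
      exact congrArg a (Subtype.ext rfl)
    · rw [dif_neg h]
      exact (hall s h).symm
  push_neg at hnot
  obtain ⟨s, hsEU, hstrue⟩ := hnot
  have hsE : s.val ∉ G.edgeFinset := fun hE =>
    hsEU ((mem_EU_iff G U s.val).mpr ⟨hE, s.2.1⟩)
  unfold Jfun
  have hst : a s = true := by simpa using hstrue
  rw [Finset.prod_eq_zero (Finset.mem_univ s)
    (by rw [if_neg hsE, hst]; simp), mul_zero]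

lemma card_filter_A :
    (Finset.univ.filter fun s : {s : Sym2 (Fin n) // (∀ v ∈ s, v ∈ U) ∧ ¬s.IsDiag} =>
      s.val ∈ G.edgeFinset).card
    = (G.edgeFinset.filter fun s => ∀ v ∈ s, v ∈ U).card := by
  refine Finset.card_bij (fun s _ => s.val) ?_ ?_ ?_
  · intro s hs
    exact (mem_EU_iff G U s.val).mpr ⟨(Finset.mem_filter.mp hs).2, s.2.1⟩
  · intro s hs t ht h
    exact Subtype.ext h
  · intro t ht
    refine ⟨⟨t, ((mem_EU_iff G U t).mp ht).2,
      SimpleGraph.not_isDiag_of_mem_edgeFinset (((mem_EU_iff G U t).mp ht).1)⟩, ?_, rfl⟩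
    exact Finset.mem_filter.mpr ⟨Finset.mem_univ _, ((mem_EU_iff G U t).mp ht).1⟩

set_option maxHeartbeats 1000000 in
lemma Jfun_iota (f : {s : Sym2 (Fin n) // s ∈ G.edgeFinset.filter fun s => ∀ v ∈ s, v ∈ U}
      → Bool) (c : Bool) :
    Jfun G U (iotaMap G U f) c
      = if c then (1 / 2) * (1 / 2 : ℝ) ^ ((G.edgeFinset.filter fun s => ∀ v ∈ s, v ∈ U).card)
        else if f = fun _ => false then 1 / 2 else 0 := by
  classical
  unfold Jfun
  cases c
  · simp only [Bool.false_eq_true, if_false]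
    have hcollapse : ∀ s : {s : Sym2 (Fin n) // (∀ v ∈ s, v ∈ U) ∧ ¬s.IsDiag},
        (if s.val ∈ G.edgeFinset then (if iotaMap G U f s then (0:ℝ) else 1)
          else if iotaMap G U f s then 0 else 1) = if iotaMap G U f s then 0 else 1 :=
      fun s => by split <;> rfl
    rw [Finset.prod_congr rfl fun s _ => hcollapse s, prodBoolIndicator]
    by_cases hf : f = fun _ => false
    · have hall : ∀ s : {s : Sym2 (Fin n) // (∀ v ∈ s, v ∈ U) ∧ ¬s.IsDiag},
          iotaMap G U f s = false := by
        intro s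
        unfold iotaMap
        split
        · rw [hf]
        · rfl
      rw [if_pos hall, if_pos hf]
      norm_num
    · have hnall : ¬ ∀ s : {s : Sym2 (Fin n) // (∀ v ∈ s, v ∈ U) ∧ ¬s.IsDiag},
          iotaMap G U f s = false := by
        intro hall
        apply hf
        funext t
        have := hall (liftT G U t)
        rwa [iota_liftT] at this
      rw [if_neg hnall, if_neg hf]
      norm_num
  · simp only [if_true]
    have hc : ∀ s : {s : Sym2 (Fin n) // (∀ v ∈ s, v ∈ U) ∧ ¬s.IsDiag},
        (if s.val ∈ G.edgeFinset then ((1:ℝ)/2) else if iotaMap G U f s then 0 else 1)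
          = if s.val ∈ G.edgeFinset then (1/2 : ℝ) else 1 := by
      intro s
      by_cases h : s.val ∈ G.edgeFinset
      · simp [h]
      · have hz : iotaMap G U f s = false := by
          unfold iotaMap
          rw [dif_neg (fun hEU' => h ((mem_EU_iff G U s.val).mp hEU').1)]
        simp [h, hz]
    rw [Finset.prod_congr rfl fun s _ => hc s, Finset.prod_ite, Finset.prod_const,
      Finset.prod_const, one_pow, mul_one, card_filter_A]

set_option maxHeartbeats 1000000 in
lemma miU_eq : miU G U = Im ((G.edgeFinset.filter fun s => ∀ v ∈ s, v ∈ U).card) := by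
  classical
  unfold miU
  rw [miRV_eq_MImat]
  have hfun : (fun (a : {s : Sym2 (Fin n) // (∀ v ∈ s, v ∈ U) ∧ ¬s.IsDiag} → Bool)
      (c : Bool) => ∑ ω ∈ Finset.univ.filter
        fun ω : (Sym2 (Fin n) → Bool) × Bool =>
          (fun s : {s : Sym2 (Fin n) // (∀ v ∈ s, v ∈ U) ∧ ¬s.IsDiag} => ω.1 s.val) = a
            ∧ ω.2 = c,
        (fun ω : (Sym2 (Fin n) → Bool) × Bool => graphJoint G ω.1 ω.2) ω)
      = Jfun G U := by
    funext a c
    exact Jg_eq G U a c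
  rw [hfun]
  set m : ℕ := (G.edgeFinset.filter fun s => ∀ v ∈ s, v ∈ U).card with hm
  have hcardT : Fintype.card {s : Sym2 (Fin n) //
      s ∈ G.edgeFinset.filter fun s => ∀ v ∈ s, v ∈ U} = m := Fintype.card_coe _
  set ψ : {s : Sym2 (Fin n) // s ∈ G.edgeFinset.filter fun s => ∀ v ∈ s, v ∈ U} ≃ Fin m :=
    Fintype.equivFinOfCardEq hcardT with hψ
  set φ : (Fin m → Bool) →
      ({s : Sym2 (Fin n) // s ∈ G.edgeFinset.filter fun s => ∀ v ∈ s, v ∈ U} → Bool) :=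
    fun g => g ∘ ψ with hφ
  have hφinj : Function.Injective φ := fun g g' h => funext fun i => by
    have := congrFun h (ψ.symm i)
    simpa [hφ] using this
  have hφsurj : ∀ f, f ∈ Set.range φ := fun f => ⟨f ∘ ψ.symm, funext fun t => by simp [hφ]⟩
  have step1 : MImat (fun f c => Jfun G U (iotaMap G U f) c) = MImat (Jfun G U) :=
    MImat_comp (Jfun G U) (iotaMap G U) (iota_inj G U) (iota_zero G U)
  have step2 : MImat (fun g c => Jfun G U (iotaMap G U (φ g)) c)
      = MImat (fun f c => Jfun G U (iotaMap G U f) c) :=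
    MImat_comp (fun f c => Jfun G U (iotaMap G U f) c) φ hφinj (fun f hf c => absurd (hφsurj f) hf)
  have step3 : (fun (g : Fin m → Bool) c => Jfun G U (iotaMap G U (φ g)) c)
      = jointEC m := by
    funext g c
    rw [Jfun_iota]
    unfold jointEC
    cases c
    · simp only [Bool.false_eq_true, if_false]
      by_cases hg : g = fun _ => false
      · rw [if_pos, if_pos hg]
        funext t
        simp [hφ, hg]
      · rw [if_neg, if_neg hg]
        intro h
        apply hg
        funext i
        have := congrFun h (ψ.symm i)
        simpa [hφ] using this
    · simp [hm]
  calc MImat (Jfun G U) = MImat (fun f c => Jfun G U (iotaMap G U f) c) := step1.symm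
    _ = MImat (fun g c => Jfun G U (iotaMap G U (φ g)) c) := step2.symm
    _ = MImat (jointEC m) := by rw [step3]
    _ = Im m := (Im_eq_MImat m).symm

end Assembly
lemma EU_subset {n : ℕ} (G : SimpleGraph (Fin n)) [DecidableRel G.Adj] (U : Finset (Fin n)) :
    (G.edgeFinset.filter fun s => ∀ v ∈ s, v ∈ U) ⊆ U.offDiag.image Sym2.mk.uncurry := by
  intro s hs
  obtain ⟨hE, hU⟩ := Finset.mem_filter.mp hs
  induction s using Sym2.ind with
  | _ x y =>
    have hdiag : ¬ (s(x, y) : Sym2 (Fin n)).IsDiag :=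
      SimpleGraph.not_isDiag_of_mem_edgeFinset hE
    have hxy : x ≠ y := by simpa using hdiag
    refine Finset.mem_image.mpr ⟨(x, y), ?_, rfl⟩
    exact Finset.mem_offDiag.mpr ⟨hU x (by simp), hU y (by simp), hxy⟩

lemma EU_eq_of_clique {n : ℕ} (G : SimpleGraph (Fin n)) [DecidableRel G.Adj]
    (U : Finset (Fin n)) (h : G.IsClique U) :
    (G.edgeFinset.filter fun s => ∀ v ∈ s, v ∈ U) = U.offDiag.image Sym2.mk.uncurry := by
  refine Finset.Subset.antisymm (EU_subset G U) ?_
  intro s hs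
  obtain ⟨⟨x, y⟩, hxy, rfl⟩ := Finset.mem_image.mp hs
  obtain ⟨hx, hy, hne⟩ := Finset.mem_offDiag.mp hxy
  have hadj : G.Adj x y := h (by simpa using hx) (by simpa using hy) hne
  refine Finset.mem_filter.mpr ⟨SimpleGraph.mem_edgeFinset.mpr hadj, ?_⟩
  intro v hv
  rw [Function.uncurry_apply_pair, Sym2.mem_iff] at hv
  rcases hv with rfl | rfl
  · exact hx
  · exact hy

lemma EU_ssubset_of_not_clique {n : ℕ} (G : SimpleGraph (Fin n)) [DecidableRel G.Adj]
    (U : Finset (Fin n)) (h : ¬ G.IsClique U) :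
    (G.edgeFinset.filter fun s => ∀ v ∈ s, v ∈ U) ⊂ U.offDiag.image Sym2.mk.uncurry := by
  rw [SimpleGraph.isClique_iff, Set.Pairwise] at h
  push_neg at h
  obtain ⟨x, hx, y, hy, hne, hnadj⟩ := h
  refine (Finset.ssubset_iff_of_subset (EU_subset G U)).mpr ⟨s(x, y), ?_, ?_⟩
  · exact Finset.mem_image.mpr ⟨(x, y),
      Finset.mem_offDiag.mpr ⟨by simpa using hx, by simpa using hy, hne⟩, rfl⟩
  · intro hmem
    have hE := SimpleGraph.mem_edgeFinset.mp (Finset.mem_filter.mp hmem).1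
    rw [SimpleGraph.mem_edgeSet] at hE
    exact hnadj hE

/-- Correctness of the reduction from max-clique: (a) for every vertex subset `U`,
`I((E_{v,w})_{{v,w} ⊆ U, v ≠ w}; C) = I_m` where `m` is the number of edges of `G` with
both endpoints in `U`; (b) `G` contains a `k`-clique iff there is a subset `U` of size
`k` with mutual information `≥ I_{k(k-1)/2}`, and any `U` of size `k` that is not a
clique has mutual information strictly smaller than `I_{k(k-1)/2}`. -/
theorem stmt4 (n k : ℕ) (hk : k ≤ n) (G : SimpleGraph (Fin n)) [DecidableRel G.Adj] :
    (∀ U : Finset (Fin n),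
      miU G U = Im ((G.edgeFinset.filter fun s => ∀ v ∈ s, v ∈ U).card)) ∧
    ((∃ U : Finset (Fin n), G.IsNClique k U) ↔
      ∃ U : Finset (Fin n), U.card = k ∧ Im (k * (k - 1) / 2) ≤ miU G U) ∧
    (∀ U : Finset (Fin n), U.card = k → ¬G.IsNClique k U →
      miU G U < Im (k * (k - 1) / 2)) := by
  classical
  have part3 : ∀ U : Finset (Fin n), U.card = k → ¬G.IsNClique k U →
      miU G U < Im (k * (k - 1) / 2) := by
    intro U hcard hnk
    have hnc : ¬ G.IsClique U := fun hc => hnk ⟨hc, hcard⟩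
    have hlt : (G.edgeFinset.filter fun s => ∀ v ∈ s, v ∈ U).card < k * (k - 1) / 2 := by
      have h1 := Finset.card_lt_card (EU_ssubset_of_not_clique G U hnc)
      rwa [Sym2.card_image_offDiag, hcard, Nat.choose_two_right] at h1
    rw [miU_eq G U]
    exact Im_strictMono hlt
  refine ⟨fun U => miU_eq G U, ?_, part3⟩
  constructor
  · rintro ⟨U, hU⟩
    refine ⟨U, hU.card_eq, ?_⟩
    rw [miU_eq G U, EU_eq_of_clique G U hU.isClique, Sym2.card_image_offDiag, hU.card_eq,
      Nat.choose_two_right]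
  · rintro ⟨U, hcard, hle⟩
    refine ⟨U, ?_⟩
    by_contra hnk
    exact absurd hle (not_le.mpr (part3 U hcard hnk))
end

section
/- Let V be a finite vertex set with |V| = n ≥ 4, let ρ0 be the uniform distribution on V, let B ⊆ V with |B| = 2, and let c : V × V → ℝ be a nonnegative cost function such that c(u,v) = 0 whenever u ∉ B, and c(u,v) ≤ c1 for all u, v. Then there exist a vertex t ∉ B and a flow J (J ≥ 0 entrywise) whose result is the point mass at t (ρ1(t) = 1 and ρ1(v) = 0 for v ≠ t) with cost W(J) ≤ 2·c1/n. -/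
/-- Let `V` be a finite vertex set with `|V| = n ≥ 4`, let `ρ0` be the uniform
distribution on `V`, let `B ⊆ V` with `|B| = 2`, and let `c` be a nonnegative cost
function with `c(u,v) = 0` whenever `u ∉ B`, and `c(u,v) ≤ c1` for all `u, v`.
Then there exist a vertex `t ∉ B` and a flow `J ≥ 0` whose result is the point mass
at `t` with cost `W(J) = Σ_{u,v} c(u,v)·J(u,v) ≤ 2·c1/n`. -/
theorem stmt8 {V : Type*} [Fintype V] [DecidableEq V]
    (n : ℕ) (hn : n = Fintype.card V) (hn4 : 4 ≤ n)
    (B : Finset V) (hB : B.card = 2)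
    (c : V → V → ℝ) (hc : ∀ u v, 0 ≤ c u v)
    (c1 : ℝ) (hc1 : ∀ u v, c u v ≤ c1)
    (hzero : ∀ u v, u ∉ B → c u v = 0) :
    ∃ t ∉ B, ∃ J : V → V → ℝ,
      (∀ u v, 0 ≤ J u v) ∧
      (∀ v, 1 / (n : ℝ) + ∑ u : V, (J u v - J v u) = if v = t then 1 else 0) ∧
      ∑ u : V, ∑ v : V, c u v * J u v ≤ 2 * c1 / n := by
  have hnpos : (0:ℝ) < n := by positivity
  have hssub : B ⊂ Finset.univ := by
    apply Finset.ssubset_univ_iff.mpr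
    intro h
    have : Fintype.card V = 2 := by rw [← hB, h]; simp [Finset.card_univ]
    omega
  obtain ⟨t, -, ht⟩ := Finset.exists_of_ssubset hssub
  refine ⟨t, ht, fun u v => if v = t ∧ u ≠ t then 1 / n else 0, ?_, ?_, ?_⟩
  · intro u v; positivity
  · intro v
    by_cases hv : v = t
    · simp only [if_pos hv]
      have h1 : ∀ u : V, ((if v = t ∧ u ≠ t then (1:ℝ) / n else 0)
          - (if u = t ∧ v ≠ t then (1:ℝ) / n else 0))
          = if u ≠ t then (1:ℝ)/n else 0 := by
        intro u; by_cases hu : u = t <;> simp [hu, hv]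
      rw [Finset.sum_congr rfl (fun u _ => h1 u)]
      have h2 : ∀ u : V, (if u ≠ t then (1:ℝ)/n else 0)
          = (1:ℝ)/n - (if u = t then (1:ℝ)/n else 0) := by
        intro u; by_cases hu : u = t <;> simp [hu]
      rw [Finset.sum_congr rfl (fun u _ => h2 u), Finset.sum_sub_distrib,
        Finset.sum_const, Finset.card_univ, ← hn,
        Finset.sum_ite_eq' Finset.univ t (fun _ => (1:ℝ)/n)]
      simp only [Finset.mem_univ, if_true, nsmul_eq_mul]
      have : (n:ℝ) ≠ 0 := ne_of_gt hnpos
      field_simp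
      ring
    · simp only [if_neg hv]
      have h1 : ∀ u : V, ((if v = t ∧ u ≠ t then (1:ℝ) / n else 0)
          - (if u = t ∧ v ≠ t then (1:ℝ) / n else 0))
          = if u = t then -(1:ℝ)/n else 0 := by
        intro u; by_cases hu : u = t <;> simp [hu, hv] <;> ring
      rw [Finset.sum_congr rfl (fun u _ => h1 u)]
      rw [Finset.sum_ite_eq' Finset.univ t (fun _ => -(1:ℝ)/n)]
      simp only [Finset.mem_univ, if_true]
      field_simp
      ring
  · have hc1nn : 0 ≤ c1 := le_trans (hc t t) (hc1 t t)
    have hb : ∀ u : V, ∑ v : V, c u v * (if v = t ∧ u ≠ t then (1:ℝ)/n else 0)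
        ≤ if u ∈ B then c1 / n else 0 := by
      intro u
      have : ∀ v : V, c u v * (if v = t ∧ u ≠ t then (1:ℝ)/n else 0)
          = if v = t then c u t * (if u ≠ t then (1:ℝ)/n else 0) else 0 := by
        intro v; by_cases hv : v = t <;> simp [hv]
      rw [Finset.sum_congr rfl (fun v _ => this v),
        Finset.sum_ite_eq' Finset.univ t]
      simp only [Finset.mem_univ, if_true]
      by_cases hu : u ∈ B
      · simp only [if_pos hu]
        by_cases hut : u ≠ t
        · simp only [if_pos hut]
          rw [mul_one_div, div_le_div_iff₀ hnpos hnpos]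
          have := hc1 u t
          nlinarith
        · simp only [if_neg hut, mul_zero]
          exact div_nonneg hc1nn hnpos.le
      · simp only [if_neg hu, hzero u t hu, zero_mul, ite_self, le_refl]
    calc ∑ u : V, ∑ v : V, c u v * (if v = t ∧ u ≠ t then (1:ℝ)/n else 0)
        ≤ ∑ u : V, if u ∈ B then c1 / n else 0 :=
          Finset.sum_le_sum (fun u _ => hb u)
      _ = B.card * (c1 / n) := by
          rw [Finset.sum_ite_mem, Finset.univ_inter, Finset.sum_const,
            nsmul_eq_mul]
      _ = 2 * c1 / n := by rw [hB]; push_cast; ring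
end
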